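/- arXiv:2304.07231 — 2 statements merged into one kernel-verified Lean document; each statement's English description precedes it below -/
import Mathlib

section
/- Let 𝒰 be a neighborhood base at the identity 0 of a paratopological gyrogroup G such that gyr[x,y](U) = U for every U ∈ 𝒰 and all x, y ∈ G (i.e., 𝒰 witnesses that G is a strongly paratopological gyrogroup). Then G is a (strongly) topological gyrogroup if and only if the inversion map x ↦ ⊖x is continuous at the identity 0. -/
/-- A gyrogroup: a groupoid with identity, inverses, gyroautomorphisms satisfying the
left gyroassociative law and the left loop property. -/
class Gyrogroup (G : Type*) extends Zero G, Add G, Neg G where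
  gyr : G → G → G → G
  zero_add : ∀ x : G, 0 + x = x
  add_zero : ∀ x : G, x + 0 = x
  neg_add_cancel : ∀ x : G, -x + x = 0
  add_neg_cancel : ∀ x : G, x + -x = 0
  gyr_bijective : ∀ x y : G, Function.Bijective (gyr x y)
  gyr_add : ∀ x y a b : G, gyr x y (a + b) = gyr x y a + gyr x y b
  add_gyr_assoc : ∀ x y z : G, x + (y + z) = (x + y) + gyr x y z
  gyr_left_loop : ∀ x y : G, gyr (x + y) y = gyr x y

open Gyrogroup

/-- `𝒰` is a neighborhood base at the point `x`. -/
def IsNhdsBasisAt {G : Type*} [TopologicalSpace G] (x : G) (𝒰 : Set (Set G)) : Prop :=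
  (∀ U ∈ 𝒰, U ∈ nhds x) ∧ ∀ V ∈ nhds x, ∃ U ∈ 𝒰, U ⊆ V

/-- Every member of `𝒰` is invariant under all gyroautomorphisms: this is the witness that
a paratopological gyrogroup is *strongly* paratopological when `𝒰` is a nbhd base at `0`. -/
def GyrInvariantBase {G : Type*} [Gyrogroup G] (𝒰 : Set (Set G)) : Prop :=
  ∀ U ∈ 𝒰, ∀ x y : G, gyr x y '' U = U

namespace GyroAux

variable {G : Type*} [Gyrogroup G]

lemma inj (a : G) {b c : G} (h : a + b = a + c) : b = c := by
  have key : ∀ z : G, -a + (a + z) = gyr (-a) a z := fun z => by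
    rw [Gyrogroup.add_gyr_assoc, Gyrogroup.neg_add_cancel, Gyrogroup.zero_add]
  have h2 : gyr (-a) a b = gyr (-a) a c := by rw [← key, ← key, h]
  exact (Gyrogroup.gyr_bijective (-a) a).1 h2

lemma gyr_zero_left (a z : G) : gyr (0 : G) a z = z := by
  have h := Gyrogroup.add_gyr_assoc (0:G) a z
  rw [Gyrogroup.zero_add, Gyrogroup.zero_add] at h
  exact (inj a h).symm

lemma gyr_neg_self (a z : G) : gyr (-a) a z = z := by
  have h := Gyrogroup.gyr_left_loop (-a) a
  rw [Gyrogroup.neg_add_cancel] at h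
  rw [← h]
  exact gyr_zero_left a z

lemma left_cancel (a b : G) : -a + (a + b) = b := by
  rw [Gyrogroup.add_gyr_assoc, Gyrogroup.neg_add_cancel, Gyrogroup.zero_add, gyr_neg_self]

lemma neg_unique {a b : G} (h : a + b = 0) : b = -a :=
  inj a (h.trans (Gyrogroup.add_neg_cancel a).symm)

lemma neg_neg (a : G) : -(-a) = a :=
  (neg_unique (Gyrogroup.neg_add_cancel a)).symm

lemma left_cancel' (a b : G) : a + (-a + b) = b := by
  have h := left_cancel (-a) b
  rwa [neg_neg] at h

lemma neg_zero' : (-(0:G)) = 0 :=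
  (neg_unique (Gyrogroup.zero_add (0:G))).symm

lemma gyr_zero (x y : G) : gyr x y (0 : G) = 0 := by
  have h := Gyrogroup.gyr_add x y 0 0
  rw [Gyrogroup.add_zero] at h
  have h2 : gyr x y (0:G) + gyr x y (0:G) = gyr x y (0:G) + 0 := by
    rw [Gyrogroup.add_zero]; exact h.symm
  exact inj _ h2

lemma neg_add (a b : G) : -(a + b) = gyr a b (-b + -a) := by
  symm
  apply neg_unique
  rw [← Gyrogroup.add_gyr_assoc, left_cancel' b (-a)]
  exact Gyrogroup.add_neg_cancel a

end GyroAux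

/-- A strongly paratopological gyrogroup is a (strongly) topological
gyrogroup if and only if the inversion map is continuous at the identity. -/
theorem strongly_paratopological_gyrogroup_inv_continuous_iff_continuousAt_zero
    {G : Type*} [Gyrogroup G] [TopologicalSpace G]
    (hadd : Continuous fun p : G × G => p.1 + p.2)
    (𝒰 : Set (Set G)) (hbase : IsNhdsBasisAt (0 : G) 𝒰) (hstrong : GyrInvariantBase 𝒰) :
    Continuous (fun x : G => -x) ↔ ContinuousAt (fun x : G => -x) 0 := by
  constructor
  · exact fun h => h.continuousAt
  · intro h0
    haveI : ContinuousAdd G := ⟨hadd⟩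
    have h0' : Filter.Tendsto (fun u : G => -u) (nhds (0:G)) (nhds ((0:G))) := by
      have h : Filter.Tendsto (fun u : G => -u) (nhds (0:G)) (nhds (-(0:G))) := h0
      rwa [GyroAux.neg_zero'] at h
    rw [continuous_iff_continuousAt]
    intro x
    have T1 : Filter.Tendsto (fun y : G => -x + y) (nhds x) (nhds (0:G)) := by
      have c : Continuous (fun y : G => -x + y) := continuous_const.add continuous_id
      have h := c.tendsto x
      simpa [Gyrogroup.neg_add_cancel] using h
    have T3 : Filter.Tendsto (fun y : G => y + -x) (nhds x) (nhds (0:G)) := by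
      have c : Continuous (fun y : G => y + -x) := continuous_id.add continuous_const
      have h := c.tendsto x
      simpa [Gyrogroup.add_neg_cancel] using h
    have T5 : Filter.Tendsto (fun y : G => x + ((-x + y) + -x)) (nhds x) (nhds (0:G)) := by
      have c : Continuous (fun y : G => x + ((-x + y) + -x)) :=
        continuous_const.add ((continuous_const.add continuous_id).add continuous_const)
      have h := c.tendsto x
      simpa [Gyrogroup.neg_add_cancel, Gyrogroup.zero_add, Gyrogroup.add_neg_cancel] using h
    have T2 : Filter.Tendsto (fun y : G => -(-x + y)) (nhds x) (nhds (0:G)) := h0'.comp T1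
    have T4 : Filter.Tendsto (fun y : G => -(y + -x)) (nhds x) (nhds (0:G)) := h0'.comp T3
    have key : ContinuousAt (fun y : G => -y) x := by
      unfold ContinuousAt
      rw [Filter.tendsto_def]
      intro O hO
      -- continuity of + at (0, -x), target O
      have hA : Filter.Tendsto (fun p : G × G => p.1 + p.2) (nhds ((0:G), -x)) (nhds (-x)) := by
        have h := hadd.tendsto ((0:G), -x)
        simpa [Gyrogroup.zero_add] using h
      have h1 : (fun p : G × G => p.1 + p.2) ⁻¹' O ∈ nhds ((0:G), -x) := hA hO
      rw [mem_nhds_prod_iff] at h1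
      obtain ⟨U', hU', W, hW, hUW⟩ := h1
      obtain ⟨U2, hU2m, hU2s⟩ := hbase.2 U' hU'
      -- left translation by -x at 0, target W
      have hLW : Filter.Tendsto (fun n : G => -x + n) (nhds (0:G)) (nhds (-x)) := by
        have c : Continuous (fun n : G => -x + n) := continuous_const.add continuous_id
        have h := c.tendsto (0:G)
        simpa [Gyrogroup.add_zero] using h
      obtain ⟨U, hUm, hUs⟩ := hbase.2 _ (hLW hW)
      -- continuity of + at (0,0), target U
      have hB : Filter.Tendsto (fun p : G × G => p.1 + p.2) (nhds ((0:G), (0:G)))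
          (nhds (0:G)) := by
        have h := hadd.tendsto ((0:G), (0:G))
        simpa [Gyrogroup.zero_add] using h
      have h3 : (fun p : G × G => p.1 + p.2) ⁻¹' U ∈ nhds ((0:G), (0:G)) :=
        hB (hbase.1 U hUm)
      rw [mem_nhds_prod_iff] at h3
      obtain ⟨S, hS, T, hT, hST⟩ := h3
      have e1 : (fun y : G => -(-x + y)) ⁻¹' U2 ∈ nhds x := T2 (hbase.1 U2 hU2m)
      have e2 : (fun y : G => -(y + -x)) ⁻¹' S ∈ nhds x := T4 hS
      have e3 : (fun y : G => x + ((-x + y) + -x)) ⁻¹' T ∈ nhds x := T5 hT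
      filter_upwards [e1, e2, e3] with y hy1 hy2 hy3
      simp only [Set.mem_preimage] at hy1 hy2 hy3 ⊢
      -- notation: u = -x + y, so x + u = y
      have hxu : x + (-x + y) = y := GyroAux.left_cancel' x y
      -- q := -(y + -x) + (x + ((-x + y) + -x)) ∈ U
      have hqU : -(y + -x) + (x + ((-x + y) + -x)) ∈ U :=
        hST (Set.mk_mem_prod hy2 hy3)
      have hp : (y + -x) + (-(y + -x) + (x + ((-x + y) + -x))) = x + ((-x + y) + -x) :=
        GyroAux.left_cancel' (y + -x) _
      have hqimg : -(y + -x) + (x + ((-x + y) + -x)) ∈ gyr y (-x) '' U := by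
        rw [hstrong U hUm y (-x)]; exact hqU
      obtain ⟨w, hwU, hwq⟩ := hqimg
      have key1 : y + (-x + w) = x + ((-x + y) + -x) := by
        rw [Gyrogroup.add_gyr_assoc y (-x) w, hwq]
        exact hp
      have key2 : x + ((-x + y) + -x) = y + gyr x (-x + y) (-x) := by
        rw [Gyrogroup.add_gyr_assoc x (-x + y) (-x), hxu]
      have hbw : gyr x (-x + y) (-x) = -x + w :=
        GyroAux.inj y (key2.symm.trans key1.symm)
      have hbW : gyr x (-x + y) (-x) ∈ W := by
        rw [hbw]; exact hUs hwU
      have hA2 : gyr x (-x + y) (-(-x + y)) ∈ U' := by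
        apply hU2s
        rw [← hstrong U2 hU2m x (-x + y)]
        exact Set.mem_image_of_mem _ hy1
      have hny : -y = gyr x (-x + y) (-(-x + y)) + gyr x (-x + y) (-x) := by
        conv_lhs => rw [← hxu]
        rw [GyroAux.neg_add, Gyrogroup.gyr_add]
      rw [hny]
      exact hUW (Set.mk_mem_prod hA2 hbW)
    exact key
end

section
/- Let 𝒰 be a neighborhood base at the identity 0 of a paratopological gyrogroup G such that gyr[x,y](U) = U for every U ∈ 𝒰 and all x, y ∈ G (i.e., 𝒰 witnesses that G is a strongly paratopological gyrogroup), and suppose G is not a topological gyrogroup (the inversion map x ↦ ⊖x is not continuous). Then there exists U ∈ 𝒰 such that U ∩ (⊖U) is nowhere dense in G, i.e., the interior of the closure of U ∩ (⊖U) is empty, where ⊖U = {⊖u : u ∈ U}. -/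
open Gyrogroup

section Basic
variable {G : Type*} [Gyrogroup G]

lemma gadd_left_cancel {a x y : G} (h : a + x = a + y) : x = y := by
  have h2 : -a + (a + x) = -a + (a + y) := by rw [h]
  rw [Gyrogroup.add_gyr_assoc, Gyrogroup.add_gyr_assoc, Gyrogroup.neg_add_cancel,
    Gyrogroup.zero_add, Gyrogroup.zero_add] at h2
  exact (Gyrogroup.gyr_bijective (-a) a).1 h2

lemma ggyr_zero_left (a z : G) : gyr (0 : G) a z = z := by
  have h := Gyrogroup.add_gyr_assoc (0 : G) a z
  rw [Gyrogroup.zero_add, Gyrogroup.zero_add] at h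
  exact (gadd_left_cancel h).symm

lemma ggyr_neg_left (a z : G) : gyr (-a) a z = z := by
  have h := Gyrogroup.gyr_left_loop (-a) a
  rw [Gyrogroup.neg_add_cancel] at h
  rw [← h]; exact ggyr_zero_left a z

lemma ggyr_neg_right (a z : G) : gyr a (-a) z = z := by
  have h := Gyrogroup.gyr_left_loop a (-a)
  rw [Gyrogroup.add_neg_cancel] at h
  rw [← h]; exact ggyr_zero_left (-a) z

lemma gneg_add_cancel_left (a b : G) : -a + (a + b) = b := by
  rw [Gyrogroup.add_gyr_assoc, Gyrogroup.neg_add_cancel, Gyrogroup.zero_add, ggyr_neg_left]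

lemma gadd_neg_cancel_left (a b : G) : a + (-a + b) = b := by
  rw [Gyrogroup.add_gyr_assoc, Gyrogroup.add_neg_cancel, Gyrogroup.zero_add, ggyr_neg_right]

lemma geq_neg_of_add_eq_zero {a b : G} (h : a + b = 0) : b = -a := by
  have h2 : -a + (a + b) = -a + 0 := by rw [h]
  rwa [gneg_add_cancel_left, Gyrogroup.add_zero] at h2

lemma gneg_neg (a : G) : -(-a) = a :=
  (geq_neg_of_add_eq_zero (Gyrogroup.neg_add_cancel a)).symm

lemma ggyr_zero (x y : G) : gyr x y (0 : G) = 0 := by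
  have h : gyr x y ((0 : G) + 0) = gyr x y 0 + gyr x y 0 := Gyrogroup.gyr_add x y 0 0
  rw [Gyrogroup.zero_add] at h
  have h2 : gyr x y (0 : G) + gyr x y (0 : G) = gyr x y (0 : G) + 0 := by
    rw [Gyrogroup.add_zero]; exact h.symm
  exact gadd_left_cancel h2

lemma ggyr_neg (x y a : G) : gyr x y (-a) = -(gyr x y a) := by
  apply geq_neg_of_add_eq_zero
  rw [← Gyrogroup.gyr_add, Gyrogroup.add_neg_cancel, ggyr_zero]

lemma gneg_add_rev (a b : G) : -(a + b) = gyr a b (-b + -a) := by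
  have h : (a + b) + gyr a b (-b + -a) = 0 := by
    rw [← Gyrogroup.add_gyr_assoc, gadd_neg_cancel_left, Gyrogroup.add_neg_cancel]
  exact (geq_neg_of_add_eq_zero h).symm

end Basic

section Topo
variable {G : Type*} [Gyrogroup G] [TopologicalSpace G]

lemma gcont_left (hadd : Continuous fun p : G × G => p.1 + p.2) (a : G) :
    Continuous fun x : G => a + x :=
  hadd.comp (continuous_const.prodMk continuous_id)

lemma gcont_right (hadd : Continuous fun p : G × G => p.1 + p.2) (b : G) :
    Continuous fun x : G => x + b :=
  hadd.comp (continuous_id.prodMk continuous_const)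

def addLeftHomeo (hadd : Continuous fun p : G × G => p.1 + p.2) (a : G) : G ≃ₜ G where
  toFun := fun x => a + x
  invFun := fun x => -a + x
  left_inv := fun x => gneg_add_cancel_left a x
  right_inv := fun x => gadd_neg_cancel_left a x
  continuous_toFun := gcont_left hadd a
  continuous_invFun := gcont_left hadd (-a)

lemma addLeftHomeo_apply (hadd : Continuous fun p : G × G => p.1 + p.2) (a x : G) :
    addLeftHomeo hadd a x = a + x := rfl

lemma gexists_pair_nhds (hadd : Continuous fun p : G × G => p.1 + p.2)
    {T : Set G} (hT : T ∈ nhds (0 : G)) :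
    ∃ W ∈ nhds (0 : G), ∀ a ∈ W, ∀ b ∈ W, a + b ∈ T := by
  have hc : ContinuousAt (fun p : G × G => p.1 + p.2) ((0 : G), (0 : G)) := hadd.continuousAt
  have hpre : (fun p : G × G => p.1 + p.2) ⁻¹' T ∈ nhds ((0 : G), (0 : G)) := by
    apply hc.preimage_mem_nhds
    show T ∈ nhds ((0 : G) + 0)
    rwa [Gyrogroup.zero_add]
  rw [nhds_prod_eq] at hpre
  rcases Filter.mem_prod_iff.1 hpre with ⟨W₁, h₁, W₂, h₂, hsub⟩
  refine ⟨W₁ ∩ W₂, Filter.inter_mem h₁ h₂, ?_⟩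
  intro a ha b hb
  exact hsub (Set.mk_mem_prod ha.1 hb.2)

lemma gexists_triple_nhds (hadd : Continuous fun p : G × G => p.1 + p.2)
    {T : Set G} (hT : T ∈ nhds (0 : G)) :
    ∃ W ∈ nhds (0 : G), ∀ a ∈ W, ∀ b ∈ W, ∀ c ∈ W, a + (b + c) ∈ T := by
  obtain ⟨W₁, hW₁, h₁⟩ := gexists_pair_nhds hadd hT
  obtain ⟨W₂, hW₂, h₂⟩ := gexists_pair_nhds hadd hW₁
  exact ⟨W₁ ∩ W₂, Filter.inter_mem hW₁ hW₂,
    fun a ha b hb c hc => h₁ a ha.1 _ (h₂ b hb.2 c hc.2)⟩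

end Topo

/-- If `𝒰` witnesses that `G` is a strongly paratopological gyrogroup and
`G` is not a topological gyrogroup (its inversion map is not continuous), then there is
`U ∈ 𝒰` such that `U ∩ (⊖U)` is nowhere dense in `G`. -/
theorem exists_nowhere_dense_of_not_topological_gyrogroup
    {G : Type*} [Gyrogroup G] [TopologicalSpace G]
    (hadd : Continuous fun p : G × G => p.1 + p.2)
    (𝒰 : Set (Set G)) (hbase : IsNhdsBasisAt (0 : G) 𝒰) (hstrong : GyrInvariantBase 𝒰)
    (hnot : ¬ Continuous fun x : G => -x) :
    ∃ U ∈ 𝒰, interior (closure (U ∩ ((fun x => -x) '' U))) = (∅ : Set G) := by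
  by_contra hcon
  push_neg at hcon
  -- Key step: every basic neighborhood has its image under negation a neighborhood of 0.
  have key : ∀ U₀ ∈ 𝒰, ((fun x : G => -x) '' U₀) ∈ nhds (0 : G) := by
    intro U₀ hU₀
    obtain ⟨W, hW, hWtriple⟩ := gexists_triple_nhds hadd (hbase.1 U₀ hU₀)
    obtain ⟨V, hV𝒰, hVW⟩ := hbase.2 W hW
    set S : Set G := V ∩ ((fun x : G => -x) '' V) with hSdef
    have hSne : (interior (closure S)).Nonempty := hcon V hV𝒰
    obtain ⟨x₀, hx₀⟩ := hSne
    have hx₀cl : x₀ ∈ closure S := interior_subset hx₀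
    have hmeet : (interior (closure S) ∩ S).Nonempty :=
      mem_closure_iff_nhds.1 hx₀cl _ (isOpen_interior.mem_nhds hx₀)
    obtain ⟨s, hsO, hsS⟩ := hmeet
    -- the "rotated sum" set A = -(V+V)
    set A : Set G := {x : G | ∃ v₂ ∈ V, ∃ v₃ ∈ V, x = -(v₂ + v₃)} with hAdef
    have hAinv : ∀ x y z : G, gyr x y z ∈ A → z ∈ A := by
      intro x y z hz
      obtain ⟨v₂, hv₂, v₃, hv₃, hz⟩ := hz
      have hVinv := hstrong V hV𝒰 x y
      obtain ⟨w₂, hw₂V, hw₂⟩ : ∃ w ∈ V, gyr x y w = v₂ := by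
        rw [← hVinv] at hv₂; exact hv₂
      obtain ⟨w₃, hw₃V, hw₃⟩ : ∃ w ∈ V, gyr x y w = v₃ := by
        rw [← hVinv] at hv₃; exact hv₃
      have heq : gyr x y (-(w₂ + w₃)) = -(v₂ + v₃) := by
        rw [ggyr_neg, Gyrogroup.gyr_add, hw₂, hw₃]
      have : z = -(w₂ + w₃) := (Gyrogroup.gyr_bijective x y).1 (hz.trans heq.symm)
      exact ⟨w₂, hw₂V, w₃, hw₃V, this⟩
    -- the translated open set N
    let e := addLeftHomeo hadd (-s)
    have hN : e '' interior (closure S) ∈ nhds (0 : G) := by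
      have h0 : e s = 0 := by
        show -s + s = 0
        exact Gyrogroup.neg_add_cancel s
      have := e.isOpenMap.image_mem_nhds (isOpen_interior.mem_nhds hsO)
      rwa [h0] at this
    have hNsub : e '' interior (closure S) ⊆ closure A := by
      have h1 : e '' interior (closure S) ⊆ e '' closure S :=
        Set.image_mono interior_subset
      have h2 : e '' closure S ⊆ closure (e '' S) :=
        image_closure_subset_closure_image e.continuous
      have h3 : e '' S ⊆ A := by
        rintro _ ⟨t, htS, rfl⟩
        obtain ⟨v, hvV, hvt⟩ := htS.2
        have hsV : s ∈ V := hsS.1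
        have hmem : gyr v s (-s + -v) ∈ A := ⟨v, hvV, s, hsV, (gneg_add_rev v s).symm⟩
        have het : e t = -s + -v := by
          show -s + t = -s + -v
          rw [← hvt]
        rw [het]
        exact hAinv v s _ hmem
      exact h1.trans (h2.trans (closure_mono h3))
    -- finally: N ⊆ -U₀
    have hfin : e '' interior (closure S) ⊆ (fun x : G => -x) '' U₀ := by
      intro x hx
      have hxcl : x ∈ closure A := hNsub hx
      have hxV : (addLeftHomeo hadd x) '' V ∈ nhds x := by
        have h0 : (addLeftHomeo hadd x) 0 = x := by
          show x + 0 = x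
          exact Gyrogroup.add_zero x
        have := (addLeftHomeo hadd x).isOpenMap.image_mem_nhds (hbase.1 V hV𝒰)
        rwa [h0] at this
      obtain ⟨y, hy1, hy2⟩ := mem_closure_iff_nhds.1 hxcl _ hxV
      obtain ⟨w, hwV, hw⟩ := hy1
      have hw' : x + w = y := hw
      have hx_eq : x = y + gyr x w (-w) := by
        rw [← hw', ← Gyrogroup.add_gyr_assoc, Gyrogroup.add_neg_cancel, Gyrogroup.add_zero]
      obtain ⟨v₂, hv₂, v₃, hv₃, hy⟩ := hy2
      obtain ⟨v₁, hv₁eq⟩ : ∃ v₁, gyr x w w = v₁ := ⟨_, rfl⟩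
      have hv₁ : v₁ ∈ V := by
        rw [← hstrong V hV𝒰 x w, ← hv₁eq]
        exact Set.mem_image_of_mem _ hwV
      rw [ggyr_neg, hy, hv₁eq] at hx_eq
      have hgyr : gyr v₁ (v₂ + v₃) x = -(v₁ + (v₂ + v₃)) := by
        rw [hx_eq]
        exact (gneg_add_rev v₁ (v₂ + v₃)).symm
      have hmem : v₁ + (v₂ + v₃) ∈ U₀ :=
        hWtriple _ (hVW hv₁) v₂ (hVW hv₂) v₃ (hVW hv₃)
      rw [← hstrong U₀ hU₀ v₁ (v₂ + v₃)] at hmem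
      obtain ⟨u', hu'U₀, hu'⟩ := hmem
      have : gyr v₁ (v₂ + v₃) (-u') = gyr v₁ (v₂ + v₃) x := by
        rw [ggyr_neg, hu', hgyr]
      have hxu : x = -u' := ((Gyrogroup.gyr_bijective _ _).1 this).symm
      exact ⟨u', hu'U₀, hxu.symm⟩
    exact Filter.mem_of_superset hN hfin
  -- Now deduce continuity of negation, contradiction.
  apply hnot
  rw [continuous_iff_continuousAt]
  intro a
  rw [ContinuousAt, Filter.tendsto_def]
  intro N hN
  have hpreN : (fun x : G => -a + x) ⁻¹' N ∈ nhds (0 : G) := by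
    apply (gcont_left hadd (-a)).continuousAt.preimage_mem_nhds
    show N ∈ nhds (-a + 0)
    rwa [Gyrogroup.add_zero]
  obtain ⟨U, hU𝒰, hUsub⟩ := hbase.2 _ hpreN
  have hM : (fun x : G => x + -a) ⁻¹' ((fun x : G => -x) '' U) ∈ nhds a := by
    apply (gcont_right hadd (-a)).continuousAt.preimage_mem_nhds
    show ((fun x : G => -x) '' U) ∈ nhds (a + -a)
    rw [Gyrogroup.add_neg_cancel]
    exact key U hU𝒰
  apply Filter.mem_of_superset hM
  intro x hx
  obtain ⟨u, huU, hu⟩ := hx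
  have hu' : -u = x + -a := hu
  have h2 : -(x + -a) = gyr x (-a) (a + -x) := by
    have := gneg_add_rev x (-a)
    rwa [gneg_neg] at this
  have h1 : gyr x (-a) (a + -x) = u := by
    rw [← h2, ← hu']
    exact gneg_neg u
  have h3 : a + -x ∈ U := by
    rw [← hstrong U hU𝒰 x (-a)] at huU
    obtain ⟨t, htU, ht⟩ := huU
    have : t = a + -x := (Gyrogroup.gyr_bijective x (-a)).1 (ht.trans h1.symm)
    exact this ▸ htU
  show -x ∈ N
  have h4 : -x = -a + (a + -x) := (gneg_add_cancel_left a (-x)).symm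
  rw [h4]
  exact hUsub h3
end
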